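/- arXiv:2605.02042 — 3 statements merged into one kernel-verified Lean document; each statement's English description precedes it below -/
import Mathlib

section
/- Let H be a separable infinite-dimensional complex Hilbert space and let {f_n}_{n=0}^∞ be a sequence in H. If there exists a bounded linear operator B on H such that {B f_n} is a Parseval frame for H, then the image of the analysis operator of {f_n}, namely the set { {⟨f, f_n⟩}_{n=0}^∞ : f ∈ H and {⟨f, f_n⟩}_n ∈ ℓ²(ℕ) } ⊆ ℓ²(ℕ), contains an infinite-dimensional closed subspace of ℓ²(ℕ). -/
/-!
The frame coefficients `f ↦ (⟪f, B fₙ⟫)ₙ` of the Parseval frame `{B fₙ}` form an isometry from `H`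
into `ℓ²`, so its range is closed and, `H` being infinite-dimensional, infinite-dimensional.
Since `⟪g, B fₙ⟫ = ⟪B† g, fₙ⟫`, every sequence in that range is the coefficient sequence of `B† g`
against `{fₙ}`.
-/

open scoped InnerProductSpace ComplexInnerProductSpace

theorem lp.norm_eq_of_hasSum_sq {ι : Type*} {E : ι → Type*} [∀ i, NormedAddCommGroup (E i)]
    {x : lp E 2} {r : ℝ} (hr : 0 ≤ r) (h : HasSum (fun i => ‖x i‖ ^ 2) (r ^ 2)) : ‖x‖ = r := by
  have hx := lp.hasSum_norm (by norm_num) x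
  simp only [ENNReal.toReal_ofNat, Real.rpow_two] at hx
  exact (pow_left_inj₀ (norm_nonneg x) hr two_ne_zero).mp (hx.unique h)

theorem LinearMap.finite_range_iff_of_injective {R S M P : Type*} [Semiring R] [Semiring S]
    [AddCommMonoid M] [Module R M] [AddCommMonoid P] [Module S P] {σ : R →+* S}
    [RingHomSurjective σ] (f : M →ₛₗ[σ] P) (hf : Function.Injective f) :
    Module.Finite S (LinearMap.range f) ↔ Module.Finite R M :=
  (f.rangeRestrict.finite_iff_of_bijective
    ⟨f.injective_rangeRestrict_iff.mpr hf, f.surjective_rangeRestrict⟩).symm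

def IsParsevalFrame (𝕜 : Type*) {E ι : Type*} [RCLike 𝕜] [NormedAddCommGroup E]
    [InnerProductSpace 𝕜 E] (g : ι → E) : Prop :=
  ∀ f : E, HasSum (fun i => ‖⟪f, g i⟫_𝕜‖ ^ 2) (‖f‖ ^ 2)

namespace IsParsevalFrame

variable {𝕜 E ι : Type*} [RCLike 𝕜] [NormedAddCommGroup E] [InnerProductSpace 𝕜 E]
  {g : ι → E}

theorem memℓp_inner (hg : IsParsevalFrame 𝕜 g) (f : E) : Memℓp (fun i => ⟪f, g i⟫_𝕜) 2 :=
  memℓp_gen <| by simpa only [ENNReal.toReal_ofNat, Real.rpow_two] using (hg f).summable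

def analysis (hg : IsParsevalFrame 𝕜 g) : E →ₗᵢ⋆[𝕜] lp (fun _ : ι => 𝕜) 2 where
  toFun f := ⟨_, hg.memℓp_inner f⟩
  map_add' x y := lp.ext <| funext fun i => inner_add_left x y (g i)
  map_smul' c x := lp.ext <| funext fun i => inner_smul_left x (g i) c
  norm_map' f := lp.norm_eq_of_hasSum_sq (norm_nonneg f) (hg f)

theorem isClosed_range_analysis [CompleteSpace E] (hg : IsParsevalFrame 𝕜 g) :
    IsClosed (LinearMap.range hg.analysis.toLinearMap : Set (lp (fun _ : ι => 𝕜) 2)) := by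
  rw [LinearMap.coe_range]
  exact hg.analysis.isometry.isClosedEmbedding.isClosed_range

theorem finiteDimensional_range_analysis_iff (hg : IsParsevalFrame 𝕜 g) :
    FiniteDimensional 𝕜 (LinearMap.range hg.analysis.toLinearMap) ↔ FiniteDimensional 𝕜 E :=
  LinearMap.finite_range_iff_of_injective _ hg.analysis.injective

end IsParsevalFrame

theorem stmt0_general {H : Type*} [NormedAddCommGroup H] [InnerProductSpace ℂ H]
    [CompleteSpace H]
    (hH : ¬ FiniteDimensional ℂ H) (fseq : ℕ → H) (B : H →L[ℂ] H)
    (hB : ∀ f : H, HasSum (fun n => ‖⟪f, B (fseq n)⟫‖ ^ 2) (‖f‖ ^ 2)) :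
    ∃ S : Submodule ℂ (lp (fun _ : ℕ => ℂ) 2),
      IsClosed (S : Set (lp (fun _ : ℕ => ℂ) 2)) ∧ ¬ FiniteDimensional ℂ S ∧
      ∀ c ∈ S, ∃ f : H, ∀ n : ℕ, (c : ∀ _ : ℕ, ℂ) n = ⟪f, fseq n⟫ := by
  have hframe : IsParsevalFrame ℂ (fun n => B (fseq n)) := hB
  refine ⟨LinearMap.range hframe.analysis.toLinearMap, hframe.isClosed_range_analysis,
    hframe.finiteDimensional_range_analysis_iff.not.mpr hH, ?_⟩
  rintro _ ⟨g, rfl⟩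
  exact ⟨B.adjoint g, fun n => (B.adjoint_inner_left (fseq n) g).symm⟩

/-- If `{B f_n}` is a Parseval frame for some bounded operator `B` on `H`,
then the image of the analysis operator of `{f_n}` contains an infinite-dimensional
closed subspace of `ℓ²(ℕ)`. -/
theorem stmt0 {H : Type*} [NormedAddCommGroup H] [InnerProductSpace ℂ H]
    [CompleteSpace H] [TopologicalSpace.SeparableSpace H]
    (hH : ¬ FiniteDimensional ℂ H) (fseq : ℕ → H) (B : H →L[ℂ] H)
    (hB : ∀ f : H, HasSum (fun n => ‖⟪f, B (fseq n)⟫‖ ^ 2) (‖f‖ ^ 2)) :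
    ∃ S : Submodule ℂ (lp (fun _ : ℕ => ℂ) 2),
      IsClosed (S : Set (lp (fun _ : ℕ => ℂ) 2)) ∧ ¬ FiniteDimensional ℂ S ∧
      ∀ c ∈ S, ∃ f : H, ∀ n : ℕ, (c : ∀ _ : ℕ, ℂ) n = ⟪f, fseq n⟫ :=
  stmt0_general hH fseq B hB
end

section
/- Let H be a separable infinite-dimensional complex Hilbert space and let {f_n}_{n=0}^∞ be a sequence in H. If the image of the analysis operator of {f_n}, i.e. the set { {⟨f, f_n⟩}_{n=0}^∞ : f ∈ H and {⟨f, f_n⟩}_n ∈ ℓ²(ℕ) } ⊆ ℓ²(ℕ), contains an infinite-dimensional closed subspace of ℓ²(ℕ), then there exist an infinite-dimensional linear subspace D ⊆ H and a constant A > 0 such that A‖f‖² ≤ ∑_{n=0}^∞ |⟨f, f_n⟩|² < ∞ for every f ∈ D. -/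
/-!
Let `K` be the closed span of the `fₙ`. Each `c ∈ S` is the coefficient sequence of exactly one
vector of `K` (project any preimage onto `K`), which yields an injective conjugate-linear map
`T : S → H`. Coefficients depend continuously on the vector, so the graph of `T` is closed and `T`
is bounded by the closed graph theorem. Then `D = range T` is infinite-dimensional, and
`f = T c ∈ D` satisfies `‖f‖² ≤ ‖T‖² ‖c‖² = ‖T‖² ∑ |⟨f, fₙ⟩|²`.
-/

open scoped ComplexInnerProductSpace

open Submodule Set Filter Topology

theorem LinearMap.continuous_of_seq_closed_graph_of_conj {V W : Type*}
    [NormedAddCommGroup V] [NormedSpace ℂ V] [CompleteSpace V]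
    [NormedAddCommGroup W] [NormedSpace ℂ W] [CompleteSpace W] (g : V →ₗ⋆[ℂ] W)
    (hg : ∀ (u : ℕ → V) (x y),
      Tendsto u atTop (𝓝 x) → Tendsto (g ∘ u) atTop (𝓝 y) → y = g x) :
    Continuous g :=
  let gℝ : V →ₗ[ℝ] W :=
    { toFun := g
      map_add' := map_add g
      map_smul' r x := by
        rw [← Complex.coe_smul, map_smulₛₗ, Complex.conj_ofReal, Complex.coe_smul,
          RingHom.id_apply] }
  gℝ.continuous_of_seq_closed_graph hg

section Orthogonal

variable {𝕜 E ι : Type*} [RCLike 𝕜] [NormedAddCommGroup E] [InnerProductSpace 𝕜 E]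

theorem mem_orthogonal_span_range_iff {v : ι → E} {x : E} :
    x ∈ (span 𝕜 (range v))ᗮ ↔ ∀ i, inner 𝕜 x (v i) = 0 := by
  refine ⟨fun hx i => inner_left_of_mem_orthogonal (subset_span (mem_range_self i)) hx,
    fun h => (mem_orthogonal' _ _).2 fun u hu => ?_⟩
  induction hu using span_induction with
  | mem _ hu => obtain ⟨i, rfl⟩ := hu; exact h i
  | zero => exact inner_zero_right x
  | add _ _ _ _ hu hw => rw [inner_add_right, hu, hw, add_zero]
  | smul a _ _ hu => rw [inner_smul_right, hu, mul_zero]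

theorem eq_of_mem_orthogonal_orthogonal_of_inner_eq {v : ι → E} {x y : E}
    (hx : x ∈ (span 𝕜 (range v))ᗮᗮ) (hy : y ∈ (span 𝕜 (range v))ᗮᗮ)
    (h : ∀ i, inner 𝕜 x (v i) = inner 𝕜 y (v i)) : x = y := by
  have hxy : x - y ∈ (span 𝕜 (range v))ᗮ :=
    mem_orthogonal_span_range_iff.2 fun i => by rw [inner_sub_left, h i, sub_self]
  exact sub_eq_zero.1 <| disjoint_def.1 (orthogonal_disjoint _) _ hxy (sub_mem hx hy)

theorem exists_mem_orthogonal_orthogonal_inner_eq [CompleteSpace E] (v : ι → E) (x : E) :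
    ∃ y ∈ (span 𝕜 (range v))ᗮᗮ, ∀ i, inner 𝕜 y (v i) = inner 𝕜 x (v i) := by
  set K := (span 𝕜 (range v))ᗮ
  refine ⟨x - K.starProjection x, sub_starProjection_mem_orthogonal x, fun i => ?_⟩
  rw [inner_sub_left, mem_orthogonal_span_range_iff.1 (K.starProjection_apply_mem x) i, sub_zero]

end Orthogonal

theorem lp.hasSum_norm_sq {ι E : Type*} [NormedAddCommGroup E] (c : lp (fun _ : ι => E) 2) :
    HasSum (fun i => ‖c i‖ ^ 2) (‖c‖ ^ 2) := by
  simpa using lp.hasSum_norm (p := 2) (by norm_num) c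

section AnalysisInverse

variable {E ι : Type*} [NormedAddCommGroup E] [InnerProductSpace ℂ E] [CompleteSpace E]
  {v : ι → E} {S : Submodule ℂ (lp (fun _ : ι => ℂ) 2)}

theorem exists_analysisInverse
    (hS : ∀ c ∈ S, ∃ x : E, ∀ i, (c : ι → ℂ) i = ⟪x, v i⟫) (c : S) :
    ∃ x ∈ (span ℂ (range v))ᗮᗮ, ∀ i, ⟪x, v i⟫ = (c : ι → ℂ) i := by
  obtain ⟨x, hx⟩ := hS c c.2
  simpa only [hx] using exists_mem_orthogonal_orthogonal_inner_eq v x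

variable (hS : ∀ c ∈ S, ∃ x : E, ∀ i, (c : ι → ℂ) i = ⟪x, v i⟫)

/-- Conjugate-linear, since `⟪·, ·⟫` is conjugate-linear in its first argument. -/
noncomputable def analysisInverse : S →ₗ⋆[ℂ] E where
  toFun c := (exists_analysisInverse hS c).choose
  map_add' c d := by
    obtain ⟨hc, hc'⟩ := (exists_analysisInverse hS c).choose_spec
    obtain ⟨hd, hd'⟩ := (exists_analysisInverse hS d).choose_spec
    obtain ⟨hcd, hcd'⟩ := (exists_analysisInverse hS (c + d)).choose_spec
    refine eq_of_mem_orthogonal_orthogonal_of_inner_eq hcd (add_mem hc hd) fun i => ?_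
    rw [hcd', inner_add_left, hc', hd']
    rfl
  map_smul' a c := by
    obtain ⟨hc, hc'⟩ := (exists_analysisInverse hS c).choose_spec
    obtain ⟨hac, hac'⟩ := (exists_analysisInverse hS (a • c)).choose_spec
    refine eq_of_mem_orthogonal_orthogonal_of_inner_eq hac (smul_mem _ _ hc) fun i => ?_
    rw [hac', inner_smul_left, hc', Complex.conj_conj]
    rfl

theorem analysisInverse_mem (c : S) : analysisInverse hS c ∈ (span ℂ (range v))ᗮᗮ :=
  (exists_analysisInverse hS c).choose_spec.1

theorem inner_analysisInverse (c : S) (i : ι) :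
    ⟪analysisInverse hS c, v i⟫ = (c : ι → ℂ) i :=
  (exists_analysisInverse hS c).choose_spec.2 i

theorem analysisInverse_injective : Function.Injective (analysisInverse hS) := fun c d h =>
  Subtype.ext <| lp.ext <| funext fun i => by
    rw [← inner_analysisInverse hS c, h, inner_analysisInverse]

theorem not_finiteDimensional_range_analysisInverse (hSinf : ¬ FiniteDimensional ℂ S) :
    ¬ FiniteDimensional ℂ (LinearMap.range (analysisInverse hS)) := fun _ =>
  hSinf <| Module.Finite.of_surjective
    (LinearEquiv.ofInjective _ (analysisInverse_injective hS)).symm.toLinearMap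
    (LinearEquiv.surjective _)

theorem continuous_analysisInverse (hSc : IsClosed (S : Set (lp (fun _ : ι => ℂ) 2))) :
    Continuous (analysisInverse hS) := by
  have : CompleteSpace S := hSc.completeSpace_coe
  refine (analysisInverse hS).continuous_of_seq_closed_graph_of_conj fun u c y hu hTu => ?_
  have hy : y ∈ (span ℂ (range v))ᗮᗮ := (isClosed_orthogonal _).mem_of_tendsto hTu
    (Eventually.of_forall fun k => analysisInverse_mem hS (u k))
  refine eq_of_mem_orthogonal_orthogonal_of_inner_eq hy (analysisInverse_mem hS c) fun i => ?_
  refine tendsto_nhds_unique (hTu.inner tendsto_const_nhds) ?_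
  simp only [Function.comp_def, inner_analysisInverse]
  exact ((lp.evalCLM ℂ _ 2 i).continuous.tendsto _).comp
    ((continuous_subtype_val.tendsto _).comp hu)

end AnalysisInverse

theorem stmt1_general {H : Type*} [NormedAddCommGroup H] [InnerProductSpace ℂ H]
    [CompleteSpace H] (fseq : ℕ → H)
    (hIm : ∃ S : Submodule ℂ (lp (fun _ : ℕ => ℂ) 2),
      IsClosed (S : Set (lp (fun _ : ℕ => ℂ) 2)) ∧ ¬ FiniteDimensional ℂ S ∧
      ∀ c ∈ S, ∃ f : H, ∀ n : ℕ, (c : ∀ _ : ℕ, ℂ) n = ⟪f, fseq n⟫) :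
    ∃ D : Submodule ℂ H, ¬ FiniteDimensional ℂ D ∧
      ∃ A : ℝ, 0 < A ∧ ∀ f ∈ D,
        Summable (fun n => ‖⟪f, fseq n⟫‖ ^ 2) ∧
        A * ‖f‖ ^ 2 ≤ ∑' n, ‖⟪f, fseq n⟫‖ ^ 2 := by
  obtain ⟨S, hSc, hSinf, hS⟩ := hIm
  obtain ⟨C, hC, hbound⟩ :=
    (⟨analysisInverse hS, continuous_analysisInverse hS hSc⟩ : S →L⋆[ℂ] H).bound
  refine ⟨LinearMap.range (analysisInverse hS),
    not_finiteDimensional_range_analysisInverse hS hSinf, (C ^ 2)⁻¹, by positivity, ?_⟩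
  rintro _ ⟨c, rfl⟩
  have hsum := lp.hasSum_norm_sq (c : lp (fun _ : ℕ => ℂ) 2)
  simp only [inner_analysisInverse]
  refine ⟨hsum.summable, ?_⟩
  rw [hsum.tsum_eq, inv_mul_le_iff₀ (by positivity), ← mul_pow]
  exact pow_le_pow_left₀ (norm_nonneg _) (hbound c) 2

/-- If the image of the analysis operator of `{f_n}` contains an
infinite-dimensional closed subspace of `ℓ²(ℕ)`, then there exist an infinite-dimensional
subspace `D ⊆ H` and `A > 0` with `A‖f‖² ≤ ∑ |⟨f, f_n⟩|² < ∞` for all `f ∈ D`. -/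
theorem stmt1 {H : Type*} [NormedAddCommGroup H] [InnerProductSpace ℂ H]
    [CompleteSpace H] [TopologicalSpace.SeparableSpace H]
    (hH : ¬ FiniteDimensional ℂ H) (fseq : ℕ → H)
    (hIm : ∃ S : Submodule ℂ (lp (fun _ : ℕ => ℂ) 2),
      IsClosed (S : Set (lp (fun _ : ℕ => ℂ) 2)) ∧ ¬ FiniteDimensional ℂ S ∧
      ∀ c ∈ S, ∃ f : H, ∀ n : ℕ, (c : ∀ _ : ℕ, ℂ) n = ⟪f, fseq n⟫) :
    ∃ D : Submodule ℂ H, ¬ FiniteDimensional ℂ D ∧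
      ∃ A : ℝ, 0 < A ∧ ∀ f ∈ D,
        Summable (fun n => ‖⟪f, fseq n⟫‖ ^ 2) ∧
        A * ‖f‖ ^ 2 ≤ ∑' n, ‖⟪f, fseq n⟫‖ ^ 2 :=
  stmt1_general fseq hIm
end

section
/- Let H be a separable infinite-dimensional complex Hilbert space and let {f_n}_{n=0}^∞ be a sequence in H. The following are equivalent: (1) {f_n} is a CO sequence, i.e., there exists a bounded linear operator B on H such that {B f_n} is an orthonormal basis of H; (2) the analysis operator of {f_n} is surjective onto ℓ²(ℕ), i.e., for every c ∈ ℓ²(ℕ) there exists f ∈ H with ⟨f, f_n⟩ = c_n for all n; (3) {f_n} is a Riesz–Fischer sequence, i.e., there exists A > 0 such that A ∑_{n=0}^k |a_n|² ≤ ‖∑_{n=0}^k a_n f_n‖² for every k and all scalars a_0, …, a_k. -/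
/-!
(1 ⇒ 2): if `B fₙ = eₙ` for an orthonormal basis `(eₙ)`, then `f = B* (∑ cₙ eₙ)` satisfies
`⟪fₙ, f⟫ = cₙ`. (2 ⇒ 3): the pairs `(f, c)` with `⟪fₙ, f⟫ = cₙ` form a closed subspace of
`H × ℓ²` projecting onto `ℓ²`, so by the open mapping theorem there are solutions with
`‖f‖ ≤ C ‖c‖`; pairing the solution for `c = a` with `∑ aₙ fₙ` gives
`‖a‖² ≤ C ‖a‖ ‖∑ aₙ fₙ‖`. (3 ⇒ 1): `H` has an orthonormal basis `(eₙ)` indexed by `ℕ`, and the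
Riesz–Fischer inequality says that `∑ aₙ fₙ ↦ ∑ aₙ eₙ` is bounded; extend it to the closed span
of the `fₙ` and precompose with the orthogonal projection onto it.
-/

section

open scoped InnerProductSpace lp

open Finset

variable {𝕜 ι E F : Type*} [RCLike 𝕜] [NormedAddCommGroup E] [InnerProductSpace 𝕜 E]

theorem Orthonormal.countable [TopologicalSpace.SeparableSpace E] {v : ι → E}
    (hv : Orthonormal 𝕜 v) : Countable ι := by
  refine Pairwise.countable_of_isOpen_disjoint (s := fun i => Metric.ball (v i) (1 / 2))
    (fun i j hij => Metric.ball_disjoint_ball ?_) (fun _ => Metric.isOpen_ball)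
    (fun _ => Metric.nonempty_ball.2 (by norm_num))
  have : ‖v i - v j‖ ^ 2 = 2 := by
    rw [@norm_sub_sq 𝕜, hv.norm_eq_one, hv.norm_eq_one, hv.inner_eq_zero hij]
    norm_num
  rw [dist_eq_norm]
  nlinarith [norm_nonneg (v i - v j)]

theorem HilbertBasis.infinite [CompleteSpace E] (b : HilbertBasis ι 𝕜 E)
    (hE : ¬ FiniteDimensional 𝕜 E) : Infinite ι := by
  by_contra hι
  have : Finite ι := not_infinite_iff_finite.mp hι
  have := Fintype.ofFinite ι
  exact hE (.of_basis b.toOrthonormalBasis.toBasis)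

theorem HilbertBasis.nonempty_nat [CompleteSpace E] [TopologicalSpace.SeparableSpace E]
    (hE : ¬ FiniteDimensional 𝕜 E) : Nonempty (HilbertBasis ℕ 𝕜 E) := by
  obtain ⟨w, b, -⟩ := exists_hilbertBasis 𝕜 E
  have := b.orthonormal.countable
  have := b.infinite hE
  obtain ⟨e⟩ : Nonempty (ℕ ≃ w) := nonempty_equiv_of_countable
  refine ⟨HilbertBasis.mk (b.orthonormal.comp e e.injective) ?_⟩
  rw [Set.range_comp, e.range_eq_univ, Set.image_univ, b.dense_span]

theorem LinearMap.exists_continuousLinearMap_comp_eq_of_norm_le {X : Type*} [AddCommGroup X]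
    [Module 𝕜 X] [CompleteSpace E] [NormedAddCommGroup F] [NormedSpace 𝕜 F] [CompleteSpace F]
    (T : X →ₗ[𝕜] E) (g : X →ₗ[𝕜] F) (C : ℝ) (hg : ∀ x, ‖g x‖ ≤ C * ‖T x‖) :
    ∃ G : E →L[𝕜] F, ∀ x, G (T x) = g x := by
  set W := (LinearMap.range T).topologicalClosure
  let T' : X →ₗ[𝕜] W := T.codRestrict W fun x =>
    (LinearMap.range T).le_topologicalClosure (LinearMap.mem_range_self T x)
  have hT' : DenseRange T' := by
    rw [DenseRange, Subtype.dense_iff, ← Set.range_comp]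
    exact (LinearMap.range T).topologicalClosure_coe.subset
  refine ⟨(g.extendOfNorm T').comp W.orthogonalProjectionOnto, fun x => ?_⟩
  have : W.orthogonalProjectionOnto (T x) = T' x :=
    W.orthogonalProjectionOnto_mem_subspace_eq_self (T' x)
  rw [ContinuousLinearMap.comp_apply, this, LinearMap.extendOfNorm_eq hT' ⟨C, hg⟩]

theorem Orthonormal.norm_sum_smul_sq {v : ι → E} (hv : Orthonormal 𝕜 v) (s : Finset ι)
    (a : ι → 𝕜) : ‖∑ i ∈ s, a i • v i‖ ^ 2 = ∑ i ∈ s, ‖a i‖ ^ 2 := by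
  rw [@norm_sq_eq_re_inner 𝕜, hv.inner_sum]
  simp [RCLike.conj_mul]

variable (𝕜) in
def IsRieszFischerWith (A : ℝ) (v : ι → E) : Prop :=
  ∀ (s : Finset ι) (a : ι → 𝕜), A * ∑ i ∈ s, ‖a i‖ ^ 2 ≤ ‖∑ i ∈ s, a i • v i‖ ^ 2

theorem isRieszFischerWith_of_range {A : ℝ} {v : ℕ → E}
    (h : ∀ (k : ℕ) (a : ℕ → 𝕜), A * ∑ n ∈ range (k + 1), ‖a n‖ ^ 2 ≤
      ‖∑ n ∈ range (k + 1), a n • v n‖ ^ 2) :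
    IsRieszFischerWith 𝕜 A v := by
  intro s a
  have hs : s ⊆ range (s.sup id + 1) := fun n hn =>
    mem_range.2 (Nat.lt_succ_of_le (le_sup (f := id) hn))
  simpa [apply_ite, ite_smul, sum_ite_mem, inter_eq_right.2 hs] using
    h (s.sup id) fun n => if n ∈ s then a n else 0

theorem IsRieszFischerWith.exists_map_eq_orthonormal [CompleteSpace E] [NormedAddCommGroup F]
    [InnerProductSpace 𝕜 F] [CompleteSpace F] {A : ℝ} (hA : 0 < A) {v : ι → E}
    (hv : IsRieszFischerWith 𝕜 A v) {e : ι → F} (he : Orthonormal 𝕜 e) :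
    ∃ B : E →L[𝕜] F, ∀ i, B (v i) = e i := by
  have hbound : ∀ a : ι →₀ 𝕜, ‖Finsupp.linearCombination 𝕜 e a‖ ≤
      √A⁻¹ * ‖Finsupp.linearCombination 𝕜 v a‖ := by
    intro a
    simp only [Finsupp.linearCombination_apply, Finsupp.sum]
    rw [← sq_le_sq₀ (norm_nonneg _) (by positivity), mul_pow, Real.sq_sqrt (by positivity),
      he.norm_sum_smul_sq, le_inv_mul_iff₀ hA]
    exact hv _ _
  obtain ⟨B, hB⟩ := LinearMap.exists_continuousLinearMap_comp_eq_of_norm_le _ _ _ hbound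
  exact ⟨B, fun i => by simpa using hB (Finsupp.single i 1)⟩

theorem forall_exists_inner_eq_iff {v : ι → E} :
    (∀ c : ℓ²(ι, 𝕜), ∃ f : E, ∀ i, ⟪f, v i⟫_𝕜 = c i) ↔
      ∀ c : ℓ²(ι, 𝕜), ∃ f : E, ∀ i, ⟪v i, f⟫_𝕜 = c i := by
  constructor <;> intro h c <;> obtain ⟨f, hf⟩ := h (star c) <;>
    exact ⟨f, fun i => by
      rw [← inner_conj_symm, hf, lp.star_apply, RCLike.star_def, RCLike.conj_conj]⟩

theorem HilbertBasis.exists_inner_eq_of_map_eq [CompleteSpace E] [NormedAddCommGroup F]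
    [InnerProductSpace 𝕜 F] [CompleteSpace F] (b : HilbertBasis ι 𝕜 F) {B : E →L[𝕜] F}
    {v : ι → E} (hB : ∀ i, B (v i) = b i) (c : ℓ²(ι, 𝕜)) : ∃ f : E, ∀ i, ⟪v i, f⟫_𝕜 = c i :=
  ⟨B.adjoint (b.repr.symm c), fun i => by
    rw [ContinuousLinearMap.adjoint_inner_right, hB, ← b.repr_apply_apply,
      LinearIsometryEquiv.apply_symm_apply]⟩

theorem exists_norm_le_of_forall_exists_inner_eq [CompleteSpace E] {v : ι → E}
    (h : ∀ c : ℓ²(ι, 𝕜), ∃ f : E, ∀ i, ⟪v i, f⟫_𝕜 = c i) :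
    ∃ C > 0, ∀ c : ℓ²(ι, 𝕜), ∃ f : E, (∀ i, ⟪v i, f⟫_𝕜 = c i) ∧ ‖f‖ ≤ C * ‖c‖ := by
  let X : Submodule 𝕜 (E × ℓ²(ι, 𝕜)) :=
    { carrier := {p | ∀ i, ⟪v i, p.1⟫_𝕜 = p.2 i}
      add_mem' := fun hp hq i => by simp [inner_add_right, hp i, hq i]
      zero_mem' := fun i => by simp
      smul_mem' := fun a p hp i => by simp [inner_smul_right, hp i] }
  have hX : IsClosed (X : Set (E × ℓ²(ι, 𝕜))) := by
    simp only [X, Submodule.coe_set_mk, AddSubmonoid.coe_set_mk, AddSubsemigroup.coe_set_mk,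
      Set.ofPred_forall]
    exact isClosed_iInter fun i => isClosed_eq (by fun_prop)
      ((continuous_apply i).comp (lp.uniformContinuous_coe.continuous.comp continuous_snd))
  have : CompleteSpace X := hX.completeSpace_coe
  have hsurj : Function.Surjective ((ContinuousLinearMap.snd 𝕜 E ℓ²(ι, 𝕜)).comp X.subtypeL) :=
    fun c => let ⟨f, hf⟩ := h c; ⟨⟨(f, c), hf⟩, rfl⟩
  obtain ⟨C, hC, hCX⟩ := ContinuousLinearMap.exists_preimage_norm_le _ hsurj
  refine ⟨C, hC, fun c => ?_⟩
  obtain ⟨x, rfl, hnorm⟩ := hCX c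
  exact ⟨(x : E × ℓ²(ι, 𝕜)).1, x.2, (norm_fst_le _).trans hnorm⟩

theorem exists_isRieszFischerWith_of_forall_exists_inner_eq [CompleteSpace E] {v : ι → E}
    (h : ∀ c : ℓ²(ι, 𝕜), ∃ f : E, ∀ i, ⟪v i, f⟫_𝕜 = c i) :
    ∃ A > 0, IsRieszFischerWith 𝕜 A v := by
  classical
  obtain ⟨C, hC, hsol⟩ := exists_norm_le_of_forall_exists_inner_eq h
  refine ⟨(C ^ 2)⁻¹, by positivity, fun s a => ?_⟩
  set S := ∑ i ∈ s, a i • v i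
  set c : ℓ²(ι, 𝕜) := ∑ i ∈ s, lp.single 2 i (a i)
  obtain ⟨f, hf, hfc⟩ := hsol c
  have hc : ‖c‖ ^ 2 = ∑ i ∈ s, ‖a i‖ ^ 2 := by
    simpa using lp.norm_sum_single (p := 2) (by norm_num) a s
  have hSf : ⟪S, f⟫_𝕜 = ⟪c, c⟫_𝕜 := by
    calc ⟪S, f⟫_𝕜 = ∑ i ∈ s, ⟪lp.single 2 i (a i), c⟫_𝕜 := by
          simp [S, sum_inner, inner_smul_left, hf, lp.inner_single_left, mul_comm]
      _ = ⟪c, c⟫_𝕜 := (sum_inner _ _ _).symm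
  have hcS : ‖c‖ ≤ C * ‖S‖ := by
    have : ‖c‖ ^ 2 ≤ ‖S‖ * (C * ‖c‖) := by
      rw [← inner_self_eq_norm_sq (𝕜 := 𝕜), ← hSf]
      exact (RCLike.re_le_norm _).trans
        ((norm_inner_le_norm S f).trans (mul_le_mul_of_nonneg_left hfc (norm_nonneg S)))
    by_contra! hlt
    have hc0 : 0 < ‖c‖ := (by positivity : 0 ≤ C * ‖S‖).trans_lt hlt
    nlinarith
  calc (C ^ 2)⁻¹ * ∑ i ∈ s, ‖a i‖ ^ 2 = (C ^ 2)⁻¹ * ‖c‖ ^ 2 := by rw [hc]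
    _ ≤ (C ^ 2)⁻¹ * (C * ‖S‖) ^ 2 := by gcongr
    _ = ‖S‖ ^ 2 := by field_simp

end

open scoped ComplexInnerProductSpace

/-- TFAE: (1) `{f_n}` is a CO sequence (some bounded operator maps it to an
orthonormal basis of `H`); (2) the analysis operator of `{f_n}` is surjective onto `ℓ²(ℕ)`;
(3) `{f_n}` is a Riesz–Fischer sequence. -/
theorem stmt8 {H : Type*} [NormedAddCommGroup H] [InnerProductSpace ℂ H]
    [CompleteSpace H] [TopologicalSpace.SeparableSpace H]
    (hH : ¬ FiniteDimensional ℂ H) (fseq : ℕ → H) :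
    ((∃ B : H →L[ℂ] H, Orthonormal ℂ (fun n => B (fseq n)) ∧
        (Submodule.span ℂ (Set.range fun n => B (fseq n))).topologicalClosure = ⊤) ↔
      (∀ c : lp (fun _ : ℕ => ℂ) 2, ∃ f : H, ∀ n : ℕ, ⟪f, fseq n⟫ = c n)) ∧
    ((∀ c : lp (fun _ : ℕ => ℂ) 2, ∃ f : H, ∀ n : ℕ, ⟪f, fseq n⟫ = c n) ↔
      (∃ A : ℝ, 0 < A ∧ ∀ (k : ℕ) (a : ℕ → ℂ),
        A * ∑ n ∈ Finset.range (k + 1), ‖a n‖ ^ 2 ≤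
          ‖∑ n ∈ Finset.range (k + 1), a n • fseq n‖ ^ 2)) := by
  obtain ⟨e⟩ := HilbertBasis.nonempty_nat (𝕜 := ℂ) hH
  rw [forall_exists_inner_eq_iff]
  refine ⟨⟨?_, fun h2 => ?_⟩, ⟨fun h2 => ?_, fun ⟨A, hA, hRF⟩ => ?_⟩⟩
  · rintro ⟨B, hB, hsp⟩
    exact (HilbertBasis.mk hB hsp.ge).exists_inner_eq_of_map_eq (B := B) fun n => by simp
  · obtain ⟨A, hA, hRF⟩ := exists_isRieszFischerWith_of_forall_exists_inner_eq h2
    obtain ⟨B, hB⟩ := hRF.exists_map_eq_orthonormal hA e.orthonormal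
    have hBe : (fun n => B (fseq n)) = e := funext hB
    exact ⟨B, hBe ▸ e.orthonormal, hBe ▸ e.dense_span⟩
  · obtain ⟨A, hA, hRF⟩ := exists_isRieszFischerWith_of_forall_exists_inner_eq h2
    exact ⟨A, hA, fun k => hRF _⟩
  · obtain ⟨B, hB⟩ :=
      (isRieszFischerWith_of_range hRF).exists_map_eq_orthonormal hA e.orthonormal
    exact e.exists_inner_eq_of_map_eq hB
end
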